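/- arXiv:2009.02740 — 2 statements merged into one kernel-verified Lean document; each statement's English description precedes it below -/
import Mathlib

section
/- Let ψ be σ-strongly convex on a nonempty compact convex set X ⊆ ℝ^d with mirror map Q and Fenchel coupling R. Then for all x ∈ X and all z, z' ∈ ℝ^d, R(x, z') ≤ R(x, z) + ⟨Q(z) − x, z' − z⟩ + ‖z' − z‖²/(2σ). -/
/-!
For fixed `z`, the map `y ↦ ⟪z, y⟫ - ψ y` is `σ`-strongly concave on `X` with maximiser `Q z`, so
at any `y ∈ X` it lies below its maximum `ψ* z` by at least `σ / 2 * ‖y - Q z‖ ^ 2`. Taking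
`y = Q z'` and bounding the cross term `⟪z' - z, Q z' - Q z⟫` by Young's inequality, the quadratic
terms in `Q z' - Q z` cancel and `ψ* z' ≤ ψ* z + ⟪Q z, z' - z⟫ + ‖z' - z‖ ^ 2 / (2σ)`; adding
`ψ x - ⟪x, z'⟫` to both sides gives the bound on `R`.
-/

open Filter Topology
open scoped RealInnerProductSpace

section InnerProductSpace

variable {E : Type*} [NormedAddCommGroup E] [InnerProductSpace ℝ E] {s : Set E} {m : ℝ}

lemma StrongConvexOn.strongConcaveOn_inner_sub {ψ : E → ℝ}
    (hψ : StrongConvexOn s m ψ) (z : E) : StrongConcaveOn s m fun x ↦ ⟪z, x⟫ - ψ x := by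
  have hlin : UniformConcaveOn s 0 fun x ↦ ⟪z, x⟫ :=
    ((innerₛₗ ℝ z).concaveOn hψ.1).uniformConcaveOn_zero
  have h := hlin.sub hψ
  rw [zero_add] at h
  exact h

lemma StrongConcaveOn.add_sq_le_of_isMaxOn {f : E → ℝ} {a y : E}
    (hf : StrongConcaveOn s m f) (ha : a ∈ s) (hmax : IsMaxOn f s a) (hy : y ∈ s) :
    f y + m / 2 * ‖y - a‖ ^ 2 ≤ f a := by
  have hbound : ∀ t ∈ Set.Ioo (0 : ℝ) 1, f y + (1 - t) * (m / 2 * ‖y - a‖ ^ 2) ≤ f a := by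
    rintro t ⟨ht0, ht1⟩
    have hconc := hf.2 hy ha ht0.le (sub_nonneg.2 ht1.le) (add_sub_cancel t 1)
    have hle : f (t • y + (1 - t) • a) ≤ f a :=
      hmax (hf.1 hy ha ht0.le (sub_nonneg.2 ht1.le) (add_sub_cancel t 1))
    rw [smul_eq_mul, smul_eq_mul] at hconc
    refine le_of_mul_le_mul_left ?_ ht0
    linarith
  have hlim : Tendsto (fun t : ℝ ↦ f y + (1 - t) * (m / 2 * ‖y - a‖ ^ 2)) (𝓝[>] 0)
      (𝓝 (f y + m / 2 * ‖y - a‖ ^ 2)) := by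
    have : Continuous fun t : ℝ ↦ f y + (1 - t) * (m / 2 * ‖y - a‖ ^ 2) := by fun_prop
    simpa using this.continuousWithinAt.tendsto (x := 0) (s := Set.Ioi 0)
  exact le_of_tendsto hlim (eventually_of_mem (Ioo_mem_nhdsGT zero_lt_one) hbound)

lemma real_inner_le_norm_sq_div_add (hm : 0 < m) (u v : E) :
    ⟪u, v⟫ ≤ ‖u‖ ^ 2 / (2 * m) + m / 2 * ‖v‖ ^ 2 := by
  have hsq := norm_sub_sq_real u (m • v)
  rw [real_inner_smul_right, norm_smul, Real.norm_of_nonneg hm.le, mul_pow] at hsq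
  have hcross : 2 * m * ⟪u, v⟫ ≤ ‖u‖ ^ 2 + m ^ 2 * ‖v‖ ^ 2 := by nlinarith [sq_nonneg ‖u - m • v‖]
  rw [div_add' _ _ _ (by positivity), le_div_iff₀ (by positivity)]
  nlinarith

lemma StrongConvexOn.inner_sub_le_of_isMaxOn {ψ : E → ℝ}
    (hψ : StrongConvexOn s m ψ) (hm : 0 < m) {z a : E} (ha : a ∈ s)
    (hmax : IsMaxOn (fun x ↦ ⟪z, x⟫ - ψ x) s a) (z' : E) {a' : E} (ha' : a' ∈ s) :
    ⟪z', a'⟫ - ψ a' ≤ ⟪z, a⟫ - ψ a + ⟪a, z' - z⟫ + ‖z' - z‖ ^ 2 / (2 * m) := by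
  have hgrowth := (hψ.strongConcaveOn_inner_sub z).add_sq_le_of_isMaxOn ha hmax ha'
  have hyoung := real_inner_le_norm_sq_div_add hm (z' - z) (a' - a)
  have hsplit : ⟪z', a'⟫ = ⟪z, a'⟫ + ⟪a, z' - z⟫ + ⟪z' - z, a' - a⟫ := by
    simp only [inner_sub_left, inner_sub_right, real_inner_comm a]
    ring
  linarith

end InnerProductSpace

theorem stmt_2_general {d : ℕ} (X : Set (EuclideanSpace ℝ (Fin d)))
    (hXconv : Convex ℝ X)
    (σ : ℝ) (hσ : 0 < σ)
    (ψ : EuclideanSpace ℝ (Fin d) → ℝ)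
    (hstrong : ∀ x ∈ X, ∀ y ∈ X, ∀ t ∈ Set.Icc (0:ℝ) 1,
      ψ (t • x + (1 - t) • y) ≤ t * ψ x + (1 - t) * ψ y - σ / 2 * t * (1 - t) * ‖x - y‖ ^ 2)
    (ψstar : EuclideanSpace ℝ (Fin d) → ℝ)
    (Q : EuclideanSpace ℝ (Fin d) → EuclideanSpace ℝ (Fin d))
    (hQmem : ∀ z, Q z ∈ X)
    (hψstar_le : ∀ z, ∀ x ∈ X, (inner ℝ (z) (x) : ℝ) - ψ x ≤ ψstar z)
    (hψstar_eq : ∀ z, ψstar z = (inner ℝ (z) (Q z) : ℝ) - ψ (Q z))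
    (R : EuclideanSpace ℝ (Fin d) → EuclideanSpace ℝ (Fin d) → ℝ)
    (hR : ∀ x z, R x z = ψ x + ψstar z - (inner ℝ (x) (z) : ℝ)) :
    ∀ x ∈ X, ∀ z z', R x z' ≤ R x z + (inner ℝ (Q z - x) (z' - z) : ℝ) + ‖z' - z‖ ^ 2 / (2 * σ) := by
  have hψ : StrongConvexOn X σ ψ := by
    refine ⟨hXconv, fun x hx y hy a b ha hb hab ↦ ?_⟩
    obtain rfl : b = 1 - a := by linarith
    have := hstrong x hx y hy a ⟨ha, by linarith⟩
    rw [smul_eq_mul, smul_eq_mul]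
    linarith
  have hmax : ∀ z, IsMaxOn (fun x ↦ ⟪z, x⟫ - ψ x) X (Q z) := fun z y hy ↦ by
    simpa [← hψstar_eq] using hψstar_le z y hy
  intro x _ z z'
  have hconj := hψ.inner_sub_le_of_isMaxOn hσ (hQmem z) (hmax z) z' (hQmem z')
  have hsplit : ⟪Q z - x, z' - z⟫ = ⟪Q z, z' - z⟫ - (⟪x, z'⟫ - ⟪x, z⟫) := by
    simp only [inner_sub_left, inner_sub_right]
    ring
  rw [hR, hR, hψstar_eq, hψstar_eq]
  linarith

theorem stmt_2 {d : ℕ} (X : Set (EuclideanSpace ℝ (Fin d)))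
    (hXne : X.Nonempty) (hXcpt : IsCompact X) (hXconv : Convex ℝ X)
    (σ : ℝ) (hσ : 0 < σ)
    (ψ : EuclideanSpace ℝ (Fin d) → ℝ) (hψ : ContinuousOn ψ X)
    (hstrong : ∀ x ∈ X, ∀ y ∈ X, ∀ t ∈ Set.Icc (0:ℝ) 1,
      ψ (t • x + (1 - t) • y) ≤ t * ψ x + (1 - t) * ψ y - σ / 2 * t * (1 - t) * ‖x - y‖ ^ 2)
    (ψstar : EuclideanSpace ℝ (Fin d) → ℝ)
    (Q : EuclideanSpace ℝ (Fin d) → EuclideanSpace ℝ (Fin d))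
    (hQmem : ∀ z, Q z ∈ X)
    (hψstar_le : ∀ z, ∀ x ∈ X, (inner ℝ (z) (x) : ℝ) - ψ x ≤ ψstar z)
    (hψstar_eq : ∀ z, ψstar z = (inner ℝ (z) (Q z) : ℝ) - ψ (Q z))
    (R : EuclideanSpace ℝ (Fin d) → EuclideanSpace ℝ (Fin d) → ℝ)
    (hR : ∀ x z, R x z = ψ x + ψstar z - (inner ℝ (x) (z) : ℝ)) :
    ∀ x ∈ X, ∀ z z', R x z' ≤ R x z + (inner ℝ (Q z - x) (z' - z) : ℝ) + ‖z' - z‖ ^ 2 / (2 * σ) :=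
  stmt_2_general X hXconv σ hσ ψ hstrong ψstar Q hQmem hψstar_le hψstar_eq R hR
end

section
/- (Robbins–Siegmund) Let (F_k) be a filtration and (v_k), (a_k), (b_k), (φ_k) nonnegative sequences of random variables adapted to (F_k) satisfying E[v_{k+1} | F_k] ≤ (1 + a_k) v_k + b_k − φ_k for all k. If Σ_k a_k < ∞ and Σ_k b_k < ∞ almost surely, then v_k converges almost surely to a finite random variable and Σ_k φ_k < ∞ almost surely. -/
/-!
Dividing by the discount factor `P k = ∏_{j<k} (1 + a_j)` (which is `ℱ (k-1)`-measurable, at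
least `1`, and converges when `∑ a_k < ∞`) turns the recursion into
`E[u_{k+1} | ℱ_k] ≤ u_k + β_k - ψ_k` with `u = v / P`, `β_k = b_k / P_{k+1}`,
`ψ_k = φ_k / P_{k+1}`, so `X_n = u_n - ∑_{j<n} (β_j - ψ_j)` is a supermartingale bounded below by
the predictable sequence `-∑_{j<n} β_j`. Stopping `X` just before these partial sums exceed `M`
gives a supermartingale bounded below by `-M`, hence convergent; on `{∑ β < M}` it equals `X`.
Convergence of `X` then bounds `∑ ψ` and gives convergence of `u`, and multiplying back by `P`
gives the claims for `v` and `φ`.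
-/

open MeasureTheory Filter Topology Finset

theorem exists_tendsto_and_summable_of_tendsto_sub_sum {u β ψ : ℕ → ℝ} (hu : ∀ n, 0 ≤ u n)
    (hψ : ∀ n, 0 ≤ ψ n) (hβ : Summable β) {l : ℝ}
    (h : Tendsto (fun n => u n - ∑ j ∈ range n, (β j - ψ j)) atTop (𝓝 l)) :
    (∃ l', Tendsto u atTop (𝓝 l')) ∧ Summable ψ := by
  have hβ_tendsto := hβ.hasSum.tendsto_sum_nat
  obtain ⟨C, hC⟩ := (h.add hβ_tendsto).bddAbove_range
  have hdecomp (n : ℕ) : ∑ j ∈ range n, ψ j =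
      (u n - ∑ j ∈ range n, (β j - ψ j)) + ∑ j ∈ range n, β j - u n := by
    rw [sum_sub_distrib]; ring
  have hψ_sum : Summable ψ := summable_of_sum_range_le hψ fun n => by
    rw [hdecomp]; linarith [hC ⟨n, rfl⟩, hu n]
  refine ⟨⟨l + ∑' j, β j - ∑' j, ψ j, ?_⟩, hψ_sum⟩
  refine ((h.add hβ_tendsto).sub hψ_sum.hasSum.tendsto_sum_nat).congr fun n => ?_
  rw [hdecomp]; ring

noncomputable def prodOneAdd {Ω : Type*} (a : ℕ → Ω → ℝ) (k : ℕ) (ω : Ω) : ℝ :=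
  ∏ j ∈ range k, (1 + a j ω)

section prodOneAdd

variable {Ω : Type*} {a : ℕ → Ω → ℝ}

theorem prodOneAdd_succ (k : ℕ) (ω : Ω) :
    prodOneAdd a (k + 1) ω = prodOneAdd a k ω * (1 + a k ω) :=
  prod_range_succ _ _

theorem one_le_prodOneAdd {ω : Ω} (ha : ∀ j, 0 ≤ a j ω) (k : ℕ) : 1 ≤ prodOneAdd a k ω :=
  one_le_prod fun j _ => le_add_of_nonneg_right (ha j)

theorem measurable_prodOneAdd {m0 : MeasurableSpace Ω} {ℱ : Filtration ℕ m0} (ha : Adapted ℱ a)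
    {n k : ℕ} (hnk : n ≤ k + 1) : Measurable[ℱ k] (prodOneAdd a n) :=
  Finset.measurable_prod _ fun j hj => measurable_const.add
    ((ha j).mono (ℱ.mono (by have := mem_range.mp hj; omega)) le_rfl)

theorem exists_tendsto_prodOneAdd {ω : Ω} (ha : Summable fun j => a j ω) :
    ∃ L, Tendsto (fun k => prodOneAdd a k ω) atTop (𝓝 L) :=
  ⟨_, (Real.multipliable_one_add_of_summable ha).hasProd.tendsto_prod_nat⟩

end prodOneAdd

theorem Summable.div_of_one_le {b P : ℕ → ℝ} (hb : Summable b) (hP : ∀ n, 1 ≤ P n) :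
    Summable fun n => b n / P n :=
  hb.abs.of_norm_bounded fun n => by
    rw [Real.norm_eq_abs, abs_div]
    exact div_le_self (abs_nonneg _) ((hP n).trans (le_abs_self _))

theorem exists_tendsto_and_summable_of_tendsto_div_sub_sum {v b φ P : ℕ → ℝ}
    (hv : ∀ n, 0 ≤ v n) (hφ : ∀ n, 0 ≤ φ n) (hP_one : ∀ n, 1 ≤ P n) {L : ℝ}
    (hP : Tendsto P atTop (𝓝 L)) (hb : Summable fun j => b j / P (j + 1)) {l : ℝ}
    (h : Tendsto (fun n => v n / P n - ∑ j ∈ range n, (b j / P (j + 1) - φ j / P (j + 1)))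
      atTop (𝓝 l)) :
    (∃ l', Tendsto v atTop (𝓝 l')) ∧ Summable φ := by
  have hP_pos (n : ℕ) : 0 < P n := zero_lt_one.trans_le (hP_one n)
  obtain ⟨⟨l', hu⟩, hψ⟩ := exists_tendsto_and_summable_of_tendsto_sub_sum
    (fun n => div_nonneg (hv n) (hP_pos n).le) (fun n => div_nonneg (hφ n) (hP_pos _).le) hb h
  obtain ⟨C, hC⟩ := hP.bddAbove_range
  refine ⟨⟨l' * L, (hu.mul hP).congr fun n => div_mul_cancel₀ _ (hP_pos n).ne'⟩, ?_⟩
  refine (hψ.mul_right C).of_nonneg_of_le hφ fun n => ?_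
  calc φ n = φ n / P (n + 1) * P (n + 1) := (div_mul_cancel₀ _ (hP_pos _).ne').symm
    _ ≤ φ n / P (n + 1) * C :=
      mul_le_mul_of_nonneg_left (hC ⟨n + 1, rfl⟩) (div_nonneg (hφ n) (hP_pos _).le)

namespace MeasureTheory

variable {Ω : Type*} {m0 : MeasurableSpace Ω} {μ : Measure Ω} {ℱ : Filtration ℕ m0}

theorem Submartingale.exists_ae_tendsto_of_ae_le [IsFiniteMeasure μ] {f : ℕ → Ω → ℝ}
    (hf : Submartingale f ℱ μ) {c : ℝ} (hc : ∀ᵐ ω ∂μ, ∀ n, f n ω ≤ c) :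
    ∀ᵐ ω ∂μ, ∃ l, Tendsto (fun n => f n ω) atTop (𝓝 l) := by
  set C := 2 * max c 0
  refine hf.exists_ae_tendsto_of_bdd
    (R := (C * μ.real Set.univ - ∫ ω, f 0 ω ∂μ).toNNReal) fun n => ?_
  have hnorm : ∀ᵐ ω ∂μ, ‖f n ω‖ ≤ C - f n ω := by
    filter_upwards [hc] with ω hω
    rw [Real.norm_eq_abs, abs_le]
    constructor <;> linarith [hω n, le_max_left c 0, le_max_right c 0]
  have hmono : ∫ ω, f 0 ω ∂μ ≤ ∫ ω, f n ω ∂μ := by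
    simpa using hf.setIntegral_le (Nat.zero_le n) MeasurableSet.univ
  rw [eLpNorm_one_eq_lintegral_enorm, ← ofReal_integral_norm_eq_lintegral_enorm (hf.integrable n)]
  refine ENNReal.ofReal_le_ofReal ?_
  calc ∫ ω, ‖f n ω‖ ∂μ ≤ ∫ ω, (C - f n ω) ∂μ :=
        integral_mono_ae (hf.integrable n).norm ((integrable_const C).sub (hf.integrable n)) hnorm
    _ = C * μ.real Set.univ - ∫ ω, f n ω ∂μ := by
        rw [integral_sub (integrable_const C) (hf.integrable n), integral_const, smul_eq_mul,
          mul_comm]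
    _ ≤ C * μ.real Set.univ - ∫ ω, f 0 ω ∂μ := by linarith

theorem Supermartingale.exists_tendsto_of_ge_neg_sum [IsFiniteMeasure μ] {X β : ℕ → Ω → ℝ}
    (hX : Supermartingale X ℱ μ) (hβ : Adapted ℱ β)
    (hlow : ∀ᵐ ω ∂μ, ∀ n, -∑ j ∈ range n, β j ω ≤ X n ω) :
    ∀ᵐ ω ∂μ, BddAbove (Set.range fun n => ∑ j ∈ range n, β j ω) →
      ∃ l, Tendsto (fun n => X n ω) atTop (𝓝 l) := by
  -- `τ M` is the last time before the partial sums exceed `M`; it is a stopping time since the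
  -- sum up to index `n` is `ℱ n`-measurable.
  set τ : ℕ → Ω → ℕ∞ := fun M =>
    hittingAfter (fun n ω => ∑ j ∈ range (n + 1), β j ω) (Set.Ioi (M : ℝ)) 0
  have hτ (M : ℕ) : IsStoppingTime ℱ (τ M) :=
    Adapted.isStoppingTime_hittingAfter (fun n => Finset.measurable_sum _ fun j hj =>
      (hβ j).mono (ℱ.mono (Nat.lt_succ_iff.mp (mem_range.mp hj))) le_rfl) measurableSet_Ioi
  have hsum_le (M : ℕ) (ω : Ω) (j : ℕ) (hj : (j : ℕ∞) ≤ τ M ω) :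
      ∑ i ∈ range j, β i ω ≤ M := by
    cases j with
    | zero => simp
    | succ k =>
      have hk : (k : ℕ∞) < τ M ω := (Nat.cast_lt.mpr k.lt_succ_self).trans_le hj
      have hk_notMem := notMem_of_lt_hittingAfter hk k.zero_le
      exact not_lt.mp hk_notMem
  have hstopped_le (M : ℕ) : ∀ᵐ ω ∂μ, ∀ n, stoppedProcess (-X) (τ M) n ω ≤ M := by
    filter_upwards [hlow] with ω hω n
    rcases le_total (n : ℕ∞) (τ M ω) with hn | hn
    · rw [stoppedProcess_eq_of_le hn, Pi.neg_apply, Pi.neg_apply]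
      linarith [hω n, hsum_le M ω n hn]
    · obtain ⟨t, ht⟩ := WithTop.ne_top_iff_exists.mp (ne_top_of_le_ne_top WithTop.coe_ne_top hn)
      rw [stoppedProcess_eq_of_ge hn, ← ht]
      change -X t ω ≤ M
      linarith [hω t, hsum_le M ω t ht.le]
  have hconv : ∀ᵐ ω ∂μ, ∀ M : ℕ,
      ∃ l, Tendsto (fun n => stoppedProcess (-X) (τ M) n ω) atTop (𝓝 l) :=
    ae_all_iff.mpr fun M => (hX.neg.stoppedProcess (hτ M)).exists_ae_tendsto_of_ae_le
      (hstopped_le M)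
  filter_upwards [hconv] with ω hω ⟨B, hB⟩
  obtain ⟨M, hM⟩ := exists_nat_gt B
  have hτ_top : τ M ω = ⊤ := hittingAfter_eq_top_iff.mpr fun j _ hj =>
    (hB ⟨j + 1, rfl⟩).not_gt (hM.trans hj)
  obtain ⟨l, hl⟩ := hω M
  refine ⟨-l, ?_⟩
  simpa [stoppedProcess_eq_of_le (hτ_top ▸ le_top)] using hl.neg

theorem condExp_mul_le_mul_of_condExp_le {m : MeasurableSpace Ω} {c f g : Ω → ℝ}
    (hc : StronglyMeasurable[m] c) (hc_nonneg : 0 ≤ᵐ[μ] c) (hcf : Integrable (c * f) μ)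
    (hf : Integrable f μ) (hfg : μ[f|m] ≤ᵐ[μ] g) : μ[c * f|m] ≤ᵐ[μ] c * g := by
  filter_upwards [condExp_mul_of_stronglyMeasurable_left hc hcf hf, hc_nonneg, hfg]
    with ω hmul hcω hfgω
  rw [hmul, Pi.mul_apply, Pi.mul_apply]
  exact mul_le_mul_of_nonneg_left hfgω hcω

theorem Integrable.div_of_one_le {f g : Ω → ℝ} (hf : Integrable f μ)
    (hg : AEStronglyMeasurable g μ) (hg_one : ∀ᵐ ω ∂μ, 1 ≤ g ω) :
    Integrable (fun ω => f ω / g ω) μ := by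
  refine hf.norm.mono' (hf.aestronglyMeasurable.div₀ hg) ?_
  filter_upwards [hg_one] with ω hω
  rw [Real.norm_eq_abs, Real.norm_eq_abs, abs_div]
  exact div_le_self (abs_nonneg _) (hω.trans (le_abs_self _))

theorem supermartingale_sub_sum [IsFiniteMeasure μ] {u d : ℕ → Ω → ℝ}
    (hu : Adapted ℱ u) (hd : Adapted ℱ d) (hu_int : ∀ n, Integrable (u n) μ)
    (hd_int : ∀ n, Integrable (d n) μ) (hud : ∀ n, μ[u (n + 1)|ℱ n] ≤ᵐ[μ] u n + d n) :
    Supermartingale (fun n ω => u n ω - ∑ j ∈ range n, d j ω) ℱ μ := by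
  have hsum_meas (n k : ℕ) (hnk : n ≤ k + 1) :
      StronglyMeasurable[ℱ k] fun ω => ∑ j ∈ range n, d j ω :=
    (Finset.measurable_sum _ fun j hj =>
      (hd j).mono (ℱ.mono (by have := mem_range.mp hj; omega)) le_rfl).stronglyMeasurable
  have hsum_int (n : ℕ) : Integrable (fun ω => ∑ j ∈ range n, d j ω) μ :=
    integrable_finsetSum _ fun j _ => hd_int j
  refine supermartingale_nat (fun n => (hu n).stronglyMeasurable.sub (hsum_meas n n n.le_succ))
    (fun n => (hu_int n).sub (hsum_int n)) fun n => ?_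
  have hpull : μ[(fun ω => u (n + 1) ω - ∑ j ∈ range (n + 1), d j ω)|ℱ n] =ᵐ[μ]
      μ[u (n + 1)|ℱ n] - fun ω => ∑ j ∈ range (n + 1), d j ω := by
    refine (condExp_sub (hu_int _) (hsum_int _) _).trans ?_
    rw [condExp_of_stronglyMeasurable (ℱ.le n) (hsum_meas _ n le_rfl) (hsum_int _)]
  filter_upwards [hpull, hud n] with ω hpullω hudω
  rw [hpullω, Pi.sub_apply, sum_range_succ]
  simp only [Pi.add_apply] at hudω
  linarith

theorem supermartingale_div_prodOneAdd [IsFiniteMeasure μ] {v a b φ : ℕ → Ω → ℝ}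
    (ha_nonneg : ∀ k, 0 ≤ᵐ[μ] a k) (hv_adapted : Adapted ℱ v) (ha_adapted : Adapted ℱ a)
    (hb_adapted : Adapted ℱ b) (hφ_adapted : Adapted ℱ φ)
    (hv_int : ∀ k, Integrable (v k) μ) (hb_int : ∀ k, Integrable (b k) μ)
    (hφ_int : ∀ k, Integrable (φ k) μ)
    (hrec : ∀ k, μ[v (k + 1) | ℱ k] ≤ᵐ[μ] fun ω => (1 + a k ω) * v k ω + b k ω - φ k ω) :
    Supermartingale (fun n ω => v n ω / prodOneAdd a n ω -
      ∑ j ∈ range n, (b j ω / prodOneAdd a (j + 1) ω - φ j ω / prodOneAdd a (j + 1) ω)) ℱ μ := by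
  have ha : ∀ᵐ ω ∂μ, ∀ k, 0 ≤ a k ω := ae_all_iff.mpr ha_nonneg
  have hP_one : ∀ᵐ ω ∂μ, ∀ k, 1 ≤ prodOneAdd a k ω := ha.mono fun ω hω => one_le_prodOneAdd hω
  have hint {f : ℕ → Ω → ℝ} (hf : ∀ n, Integrable (f n) μ) (n k : ℕ) :
      Integrable (fun ω => f n ω / prodOneAdd a k ω) μ :=
    (hf n).div_of_one_le ((measurable_prodOneAdd ha_adapted k.le_succ).mono (ℱ.le k)
      le_rfl).aestronglyMeasurable (hP_one.mono fun ω hω => hω k)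
  refine supermartingale_sub_sum
    (fun n => (hv_adapted n).div (measurable_prodOneAdd ha_adapted n.le_succ))
    (fun n => ((hb_adapted n).div (measurable_prodOneAdd ha_adapted le_rfl)).sub
      ((hφ_adapted n).div (measurable_prodOneAdd ha_adapted le_rfl)))
    (fun n => hint hv_int n n) (fun n => (hint hb_int n (n + 1)).sub (hint hφ_int n (n + 1)))
    fun k => ?_
  have hdiv : (fun ω => v (k + 1) ω / prodOneAdd a (k + 1) ω) =
      (fun ω => (prodOneAdd a (k + 1) ω)⁻¹) * v (k + 1) :=
    funext fun ω => div_eq_inv_mul _ _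
  have hstep := condExp_mul_le_mul_of_condExp_le
    (measurable_prodOneAdd ha_adapted le_rfl).inv.stronglyMeasurable
    (hP_one.mono fun ω hω => inv_nonneg.mpr (zero_le_one.trans (hω (k + 1))))
    (hdiv ▸ hint hv_int (k + 1) (k + 1)) (hv_int (k + 1)) (hrec k)
  rw [hdiv]
  filter_upwards [hstep, hP_one, ha] with ω hstepω hPω haω
  refine hstepω.trans_eq ?_
  have hPk : prodOneAdd a k ω ≠ 0 := (zero_lt_one.trans_le (hPω k)).ne'
  have hak : 1 + a k ω ≠ 0 := by linarith [haω k]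
  simp only [Pi.mul_apply, Pi.add_apply, Pi.inv_apply, prodOneAdd_succ]
  field_simp
  ring

end MeasureTheory

theorem stmt_10_general {Ω : Type*} {m0 : MeasurableSpace Ω} (μ : Measure Ω) [IsProbabilityMeasure μ]
    (ℱ : Filtration ℕ m0)
    (v a b φ : ℕ → Ω → ℝ)
    (hv_nonneg : ∀ k, 0 ≤ᵐ[μ] v k) (ha_nonneg : ∀ k, 0 ≤ᵐ[μ] a k)
    (hφ_nonneg : ∀ k, 0 ≤ᵐ[μ] φ k)
    (hv_adapted : Adapted ℱ v) (ha_adapted : Adapted ℱ a)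
    (hb_adapted : Adapted ℱ b) (hφ_adapted : Adapted ℱ φ)
    (hv_int : ∀ k, Integrable (v k) μ)
    (hb_int : ∀ k, Integrable (b k) μ) (hφ_int : ∀ k, Integrable (φ k) μ)
    (hrec : ∀ k, μ[v (k + 1) | ℱ k] ≤ᵐ[μ]
      fun ω => (1 + a k ω) * v k ω + b k ω - φ k ω)
    (ha_sum : ∀ᵐ ω ∂μ, Summable fun k => a k ω)
    (hb_sum : ∀ᵐ ω ∂μ, Summable fun k => b k ω) :
    ∀ᵐ ω ∂μ, (∃ l : ℝ, Tendsto (fun k => v k ω) atTop (nhds l)) ∧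
      Summable fun k => φ k ω := by
  have hX := supermartingale_div_prodOneAdd ha_nonneg hv_adapted ha_adapted hb_adapted hφ_adapted
    hv_int hb_int hφ_int hrec
  have ha : ∀ᵐ ω ∂μ, ∀ k, 0 ≤ a k ω := ae_all_iff.mpr ha_nonneg
  have hv : ∀ᵐ ω ∂μ, ∀ k, 0 ≤ v k ω := ae_all_iff.mpr hv_nonneg
  have hφ : ∀ᵐ ω ∂μ, ∀ k, 0 ≤ φ k ω := ae_all_iff.mpr hφ_nonneg
  have hlow : ∀ᵐ ω ∂μ, ∀ n, -∑ j ∈ range n, b j ω / prodOneAdd a (j + 1) ω ≤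
      v n ω / prodOneAdd a n ω -
        ∑ j ∈ range n, (b j ω / prodOneAdd a (j + 1) ω - φ j ω / prodOneAdd a (j + 1) ω) := by
    filter_upwards [ha, hv, hφ] with ω haω hvω hφω n
    have hP_pos (k : ℕ) : 0 < prodOneAdd a k ω := zero_lt_one.trans_le (one_le_prodOneAdd haω k)
    rw [sum_sub_distrib]
    linarith [div_nonneg (hvω n) (hP_pos n).le,
      sum_nonneg fun j (_ : j ∈ range n) => div_nonneg (hφω j) (hP_pos (j + 1)).le]
  filter_upwards [hX.exists_tendsto_of_ge_neg_sum
      (fun n => (hb_adapted n).div (measurable_prodOneAdd ha_adapted le_rfl)) hlow,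
    ha, hv, hφ, ha_sum, hb_sum] with ω hconv haω hvω hφω haω_sum hbω_sum
  have hβ := hbω_sum.div_of_one_le fun j => one_le_prodOneAdd haω (j + 1)
  obtain ⟨l, hl⟩ := hconv hβ.hasSum.tendsto_sum_nat.bddAbove_range
  obtain ⟨L, hL⟩ := exists_tendsto_prodOneAdd haω_sum
  exact exists_tendsto_and_summable_of_tendsto_div_sub_sum hvω hφω (one_le_prodOneAdd haω) hL hβ hl

theorem stmt_10 {Ω : Type*} {m0 : MeasurableSpace Ω} (μ : Measure Ω) [IsProbabilityMeasure μ]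
    (ℱ : Filtration ℕ m0)
    (v a b φ : ℕ → Ω → ℝ)
    (hv_nonneg : ∀ k, 0 ≤ᵐ[μ] v k) (ha_nonneg : ∀ k, 0 ≤ᵐ[μ] a k)
    (hb_nonneg : ∀ k, 0 ≤ᵐ[μ] b k) (hφ_nonneg : ∀ k, 0 ≤ᵐ[μ] φ k)
    (hv_adapted : Adapted ℱ v) (ha_adapted : Adapted ℱ a)
    (hb_adapted : Adapted ℱ b) (hφ_adapted : Adapted ℱ φ)
    (hv_int : ∀ k, Integrable (v k) μ) (ha_int : ∀ k, Integrable (a k) μ)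
    (hb_int : ∀ k, Integrable (b k) μ) (hφ_int : ∀ k, Integrable (φ k) μ)
    (hrec : ∀ k, μ[v (k + 1) | ℱ k] ≤ᵐ[μ]
      fun ω => (1 + a k ω) * v k ω + b k ω - φ k ω)
    (ha_sum : ∀ᵐ ω ∂μ, Summable fun k => a k ω)
    (hb_sum : ∀ᵐ ω ∂μ, Summable fun k => b k ω) :
    ∀ᵐ ω ∂μ, (∃ l : ℝ, Tendsto (fun k => v k ω) atTop (nhds l)) ∧
      Summable fun k => φ k ω :=
  stmt_10_general μ ℱ v a b φ hv_nonneg ha_nonneg hφ_nonneg hv_adapted ha_adapted hb_adapted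
    hφ_adapted hv_int hb_int hφ_int hrec ha_sum hb_sum
end
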